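/- arXiv:1906.07257 — 5 statements merged into one kernel-verified Lean document; each statement's English description precedes it below -/
import Mathlib

section
/- If the allocation set is swappable and the mixed allocation p* is Pareto Efficient, then the envy graph of p* is acyclic, where the envy graph has a directed edge from i to i' whenever ∑_j p*_j u_i(A^(j)_i) < ∑_j p*_j u_i(A^(j)_{i'}). -/
/-!
If the envy graph of `p` had a cycle, it would contain a simple cycle, i.e. a permutation `σ`
of the players under which every moved player `i` envies `σ i`. Swappability realizes the
permuted allocation `i ↦ A j (σ i)` for every `j`, so moving the weight of `p` accordingly gives
every player on the cycle the bundle it envied and everyone else the same utility: a Pareto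
improvement over `p`.
-/

open Finset Function Set

namespace Function

variable {α : Type*}

theorem exists_iterate_mem_periodicPts [Finite α] (f : α → α) (x : α) :
    ∃ t, f^[t] x ∈ periodicPts f := by
  obtain ⟨a, b, hab, heq⟩ := Finite.exists_ne_map_eq_of_infinite (fun t : ℕ => f^[t] x)
  wlog hlt : a < b generalizing a b
  · exact this b a hab.symm heq.symm (by omega)
  refine ⟨a, mk_mem_periodicPts (n := b - a) (by omega) ?_⟩
  rw [IsPeriodicPt, IsFixedPt, ← iterate_add_apply, Nat.sub_add_cancel hlt.le, heq]

theorem exists_perm_eqOn_periodicPts (f : α → α) :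
    ∃ σ : Equiv.Perm α, EqOn σ f (periodicPts f) ∧ ∀ x ∉ periodicPts f, σ x = x := by
  classical
  refine ⟨Equiv.Perm.ofSubtype ((bijOn_periodicPts f).equiv f), fun x hx => ?_,
    fun x hx => Equiv.Perm.ofSubtype_apply_of_not_mem _ hx⟩
  rw [Equiv.Perm.ofSubtype_apply_of_mem _ hx]
  rfl

end Function

/-- A cycle of `r` on a finite type contains a simple cycle, realized by a permutation. -/
theorem Relation.TransGen.exists_perm_of_self {α : Type*} [Finite α] {r : α → α → Prop}
    {a : α} (h : Relation.TransGen r a a) :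
    ∃ σ : Equiv.Perm α, (∃ b, r b (σ b)) ∧ ∀ c, σ c ≠ c → r c (σ c) := by
  classical
  set S : Set α := {c | Relation.TransGen r c c}
  have hsucc : ∀ c ∈ S, ∃ d ∈ S, r c d := fun c hc => by
    obtain ⟨d, hcd, hdc⟩ := Relation.TransGen.head'_iff.mp hc
    exact ⟨d, Relation.TransGen.tail' hdc hcd, hcd⟩
  choose! g hgS hgr using hsucc
  -- an `r`-successor map on the cycle points `S`; its periodic points carry the permutation
  set f := S.piecewise g id
  have hfS : ∀ c ∈ S, f c = g c := fun c hc => S.piecewise_eq_of_mem _ _ hc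
  have hmaps : MapsTo f S S := fun c hc => by rw [hfS c hc]; exact hgS c hc
  obtain ⟨t, ht⟩ := exists_iterate_mem_periodicPts f a
  obtain ⟨σ, hσf, hσid⟩ := exists_perm_eqOn_periodicPts f
  have hσr : ∀ c ∈ S, c ∈ periodicPts f → r c (σ c) := fun c hc hper => by
    rw [hσf hper, hfS c hc]; exact hgr c hc
  refine ⟨σ, ⟨_, hσr _ (hmaps.iterate t h) ht⟩, fun c hc => ?_⟩
  have hper : c ∈ periodicPts f := by_contra fun h => hc (hσid c h)
  by_cases hcS : c ∈ S
  · exact hσr c hcS hper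
  · exact absurd ((hσf hper).trans (S.piecewise_eq_of_notMem g id hcS)) hc

def Swappable {κ ι β : Type*} (A : κ → ι → β) : Prop :=
  ∀ j g h, ∃ l, (∀ i, i ≠ g → i ≠ h → A l i = A j i) ∧
    A l g = A j h ∧ A l h = A j g

theorem Swappable.exists_comp_perm {κ ι β : Type*} [Finite ι] {A : κ → ι → β}
    (hA : Swappable A) (σ : Equiv.Perm ι) (j : κ) : ∃ l, ∀ i, A l i = A j (σ i) := by
  classical
  induction σ using Equiv.Perm.swap_induction_on' with
  | one => exact ⟨j, fun i => rfl⟩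
  | mul_swap σ g h _ ih =>
    obtain ⟨l, hl⟩ := ih
    obtain ⟨l', hfix, hg, hh⟩ := hA l g h
    refine ⟨l', fun i => ?_⟩
    rw [Equiv.Perm.mul_apply, ← hl]
    rcases eq_or_ne i g with rfl | hig
    · rw [Equiv.swap_apply_left, hg]
    rcases eq_or_ne i h with rfl | hih
    · rw [Equiv.swap_apply_right, hh]
    · rw [Equiv.swap_apply_of_ne_of_ne hig hih, hfix i hig hih]

section pushWeights

variable {κ κ' R : Type*} [Fintype κ] [DecidableEq κ']

def pushWeights [AddCommMonoid R] (φ : κ → κ') (p : κ → R) (l : κ') : R :=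
  ∑ j with φ j = l, p j

theorem pushWeights_nonneg [AddCommMonoid R] [PartialOrder R] [IsOrderedAddMonoid R]
    (φ : κ → κ') {p : κ → R} (hp : ∀ j, 0 ≤ p j) (l : κ') : 0 ≤ pushWeights φ p l :=
  sum_nonneg fun j _ => hp j

theorem sum_pushWeights [Fintype κ'] [AddCommMonoid R] (φ : κ → κ') (p : κ → R) :
    ∑ l, pushWeights φ p l = ∑ j, p j :=
  sum_fiberwise _ φ p

theorem sum_pushWeights_mul [Fintype κ'] [NonUnitalNonAssocSemiring R] (φ : κ → κ')
    (p : κ → R) (F : κ' → R) : ∑ l, pushWeights φ p l * F l = ∑ j, p j * F (φ j) := by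
  simp_rw [pushWeights, sum_mul]
  rw [← sum_fiberwise univ φ fun j => p j * F (φ j)]
  refine sum_congr rfl fun l _ => sum_congr rfl fun j hj => ?_
  rw [(mem_filter.mp hj).2]

end pushWeights

/-- If the allocation set is swappable and the mixed allocation p* is
Pareto Efficient, then the envy graph of p* is acyclic. -/
theorem stmt4 {n m k : ℕ} (A : Fin k → Fin n → Finset (Fin m))
    (u : Fin n → Finset (Fin m) → ℝ)
    (hswap : ∀ j : Fin k, ∀ g h : Fin n, ∃ l : Fin k,
      (∀ i, i ≠ g → i ≠ h → A l i = A j i) ∧ A l g = A j h ∧ A l h = A j g)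
    (p : Fin k → ℝ) (hp0 : ∀ j, 0 ≤ p j) (hp1 : ∑ j, p j = 1)
    (hPE : ¬ ∃ q : Fin k → ℝ, (∀ j, 0 ≤ q j) ∧ (∑ j, q j = 1) ∧
      (∀ i, ∑ j, p j * u i (A j i) ≤ ∑ j, q j * u i (A j i)) ∧
      (∃ i, ∑ j, p j * u i (A j i) < ∑ j, q j * u i (A j i))) :
    ∀ i : Fin n, ¬ Relation.TransGen
      (fun a b : Fin n => ∑ j, p j * u a (A j a) < ∑ j, p j * u a (A j b)) i i := by
  intro i hcycle
  obtain ⟨σ, ⟨b, hb⟩, hσ⟩ := hcycle.exists_perm_of_self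
  choose φ hφ using Swappable.exists_comp_perm hswap σ
  have hutil : ∀ a, ∑ j, pushWeights φ p j * u a (A j a) = ∑ j, p j * u a (A j (σ a)) :=
    fun a => by simp only [sum_pushWeights_mul, hφ]
  refine hPE ⟨pushWeights φ p, pushWeights_nonneg φ hp0, (sum_pushWeights φ p).trans hp1,
    fun a => ?_, b, (hutil b).symm ▸ hb⟩
  rw [hutil]
  rcases eq_or_ne (σ a) a with hfix | hmoved
  · rw [hfix]
  · exact (hσ a hmoved).le
end

section
/- Let W = {x ∈ ℝ^n : ∑_i x_i = 1, x_i ≥ ε for all i} with 0 < ε ≤ 1/n, and let y ∈ ℝ^n satisfy ∑_i y_i = 1. If x* is the Euclidean projection of y onto W, then for every coordinate i, x*_i ≤ max{y_i, ε}. -/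
/-- If x* is the Euclidean projection of y (with ∑ y_i = 1) onto
W = {x : ∑ x_i = 1, x_i ≥ ε}, then x*_i ≤ max{y_i, ε} for every coordinate i. -/
theorem stmt7 {n : ℕ} (ε : ℝ) (hε : 0 < ε) (hεn : ε ≤ 1 / (n : ℝ))
    (y x : Fin n → ℝ) (hy : ∑ i, y i = 1)
    (hx1 : ∑ i, x i = 1) (hx2 : ∀ i, ε ≤ x i)
    (hproj : ∀ z : Fin n → ℝ, (∑ i, z i = 1) → (∀ i, ε ≤ z i) →
      ∑ i, (x i - y i) ^ 2 ≤ ∑ i, (z i - y i) ^ 2) :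
    ∀ i, x i ≤ max (y i) ε := by
  intro i
  by_contra h
  push_neg at h
  have h1 : y i < x i := lt_of_le_of_lt (le_max_left _ _) h
  have h2 : ε < x i := lt_of_le_of_lt (le_max_right _ _) h
  have hj : ∃ j, x j < y j := by
    by_contra hc
    push_neg at hc
    have : ∑ k, y k < ∑ k, x k :=
      Finset.sum_lt_sum (fun k _ => hc k) ⟨i, Finset.mem_univ i, h1⟩
    rw [hy, hx1] at this
    exact lt_irrefl 1 this
  obtain ⟨j, hjlt⟩ := hj
  have hij : i ≠ j := by
    intro e; rw [e] at h1; exact absurd hjlt (not_lt.mpr h1.le)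
  set c : ℝ := (x i - y i) - (x j - y j) with hc_def
  have hc : 0 < c := by simp only [hc_def]; linarith
  set δ : ℝ := min (x i - ε) (c / 2) with hδ_def
  have hδ0 : 0 < δ := lt_min (by linarith) (by linarith)
  have hδ1 : δ ≤ x i - ε := min_le_left _ _
  have hδ2 : δ ≤ c / 2 := min_le_right _ _
  set z : Fin n → ℝ := fun k =>
    x k + (if k = j then δ else 0) - (if k = i then δ else 0) with hz_def
  have hzsum : ∑ k, z k = 1 := by
    simp only [hz_def, Finset.sum_sub_distrib, Finset.sum_add_distrib,
      Finset.sum_ite_eq', Finset.mem_univ, if_pos, hx1]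
    ring
  have hzge : ∀ k, ε ≤ z k := by
    intro k
    simp only [hz_def]
    by_cases hki : k = i
    · subst hki
      rw [if_neg hij, if_pos rfl]
      linarith
    · by_cases hkj : k = j
      · subst hkj
        rw [if_pos rfl, if_neg hki]
        have := hx2 k
        linarith
      · rw [if_neg hkj, if_neg hki]
        have := hx2 k
        linarith
  have key := hproj z hzsum hzge
  have hdiff : ∑ k, ((z k - y k) ^ 2 - (x k - y k) ^ 2)
      = 2 * δ ^ 2 - 2 * δ * c := by
    rw [← Finset.sum_subset (Finset.subset_univ ({i, j} : Finset (Fin n)))]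
    · rw [Finset.sum_pair hij]
      simp only [hz_def, hc_def, if_neg hij, if_neg (Ne.symm hij), ite_self, if_pos rfl, ite_true]
      ring
    · intro k _ hk
      simp only [Finset.mem_insert, Finset.mem_singleton, not_or] at hk
      simp only [hz_def, if_neg hk.1, if_neg hk.2]
      ring
  have hsum : ∑ k, (z k - y k) ^ 2 = ∑ k, (x k - y k) ^ 2 + (2 * δ ^ 2 - 2 * δ * c) := by
    rw [← hdiff, ← Finset.sum_add_distrib]
    apply Finset.sum_congr rfl
    intro k _; ring
  rw [hsum] at key
  nlinarith [mul_pos hδ0 hc]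
end

section
/- Suppose the allocation set is swappable and all utilities satisfy 1 ≤ u_i(S) ≤ 2. Define ρ = (1/2) · min over triples (i, h, j) with u_i(A^(j)_i) < u_i(A^(j)_h) and u_h(A^(j)_i) < u_h(A^(j)_h) of [u_i(A^(j)_h) − u_i(A^(j)_i)] / [u_h(A^(j)_h) − u_h(A^(j)_i)]. If p ∈ P(w) for a strictly positive weight vector w with w_h ≤ ρ·w_i, then player i does not envy player h under p. -/
open scoped Classical in
/-- With ρ half the minimum envy ratio, if p ∈ P(w) for a strictly
positive weight vector with w_h ≤ ρ·w_i, then player i does not envy player h. -/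
theorem stmt8 {n m k : ℕ} (A : Fin k → Fin n → Finset (Fin m))
    (u : Fin n → Finset (Fin m) → ℝ)
    (hu : ∀ i S, 1 ≤ u i S ∧ u i S ≤ 2)
    (hswap : ∀ j : Fin k, ∀ g h : Fin n, ∃ l : Fin k,
      (∀ i, i ≠ g → i ≠ h → A l i = A j i) ∧ A l g = A j h ∧ A l h = A j g)
    (ρ : ℝ)
    (hne : (Finset.univ.filter fun t : Fin n × Fin n × Fin k =>
        u t.1 (A t.2.2 t.1) < u t.1 (A t.2.2 t.2.1) ∧
        u t.2.1 (A t.2.2 t.1) < u t.2.1 (A t.2.2 t.2.1)).Nonempty)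
    (hρ : ρ = (1 / 2) * (Finset.univ.filter fun t : Fin n × Fin n × Fin k =>
        u t.1 (A t.2.2 t.1) < u t.1 (A t.2.2 t.2.1) ∧
        u t.2.1 (A t.2.2 t.1) < u t.2.1 (A t.2.2 t.2.1)).inf' hne
        (fun t => (u t.1 (A t.2.2 t.2.1) - u t.1 (A t.2.2 t.1)) /
          (u t.2.1 (A t.2.2 t.2.1) - u t.2.1 (A t.2.2 t.1))))
    (w : Fin n → ℝ) (hw : ∀ i, 0 < w i)
    (p : Fin k → ℝ) (hp0 : ∀ j, 0 ≤ p j) (hp1 : ∑ j, p j = 1)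
    (hP : ∀ q : Fin k → ℝ, (∀ j, 0 ≤ q j) → ∑ j, q j = 1 →
      ∑ i, w i * ∑ j, q j * u i (A j i) ≤ ∑ i, w i * ∑ j, p j * u i (A j i))
    (i h : Fin n) (hwih : w h ≤ ρ * w i) :
    ¬ (∑ j, p j * u i (A j i) < ∑ j, p j * u i (A j h)) := by

  intro henvy
  by_cases hih : i = h
  · subst hih; exact lt_irrefl _ henvy
  -- ρ is positive
  have hρ0 : 0 < ρ := by
    rw [hρ]
    have : (0:ℝ) < (Finset.univ.filter fun t : Fin n × Fin n × Fin k =>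
        u t.1 (A t.2.2 t.1) < u t.1 (A t.2.2 t.2.1) ∧
        u t.2.1 (A t.2.2 t.1) < u t.2.1 (A t.2.2 t.2.1)).inf' hne
        (fun t => (u t.1 (A t.2.2 t.2.1) - u t.1 (A t.2.2 t.1)) /
          (u t.2.1 (A t.2.2 t.2.1) - u t.2.1 (A t.2.2 t.1))) := by
      rw [Finset.lt_inf'_iff]
      intro t ht
      rw [Finset.mem_filter] at ht
      exact div_pos (by linarith [ht.2.1]) (by linarith [ht.2.2])
    linarith
  -- key claim: for every j with p j > 0, u i (A j h) ≤ u i (A j i)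
  have key : ∀ j : Fin k, 0 < p j → u i (A j h) ≤ u i (A j i) := by
    intro j hpj
    by_contra hd
    push_neg at hd
    obtain ⟨l, hl1, hl2, hl3⟩ := hswap j i h
    have hlj : l ≠ j := by
      intro e; subst e
      rw [hl2] at hd; exact lt_irrefl _ hd
    set q : Fin k → ℝ := fun x => p x + (if x = l then p j else 0) - (if x = j then p j else 0) with hq
    have hq0 : ∀ x, 0 ≤ q x := by
      intro x
      simp only [hq]
      by_cases hx2 : x = l
      · subst hx2
        rw [if_pos rfl, if_neg hlj]
        linarith [hp0 x, hp0 j]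
      · rw [if_neg hx2]
        by_cases hx : x = j
        · subst hx
          rw [if_pos rfl]
          linarith [hp0 x]
        · rw [if_neg hx]
          simpa using hp0 x
    have hq1 : ∑ x, q x = 1 := by
      simp [hq, Finset.sum_add_distrib, Finset.sum_sub_distrib, hp1]
    have hsum : ∀ g : Fin n, ∑ x, q x * u g (A x g) =
        (∑ x, p x * u g (A x g)) + p j * (u g (A l g) - u g (A j g)) := by
      intro g
      have : ∀ x, q x * u g (A x g) = p x * u g (A x g)
          + (if x = l then p j * u g (A l g) else 0) - (if x = j then p j * u g (A j g) else 0) := by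
        intro x
        simp only [hq]
        by_cases hx2 : x = l
        · subst hx2
          rw [if_pos rfl, if_pos rfl, if_neg hlj, if_neg hlj]
          ring
        · rw [if_neg hx2, if_neg hx2]
          by_cases hx : x = j
          · subst hx
            rw [if_pos rfl, if_pos rfl]
            ring
          · rw [if_neg hx, if_neg hx]
            ring
      rw [Finset.sum_congr rfl (fun x _ => this x)]
      rw [Finset.sum_sub_distrib, Finset.sum_add_distrib,
        Finset.sum_ite_eq' Finset.univ l, Finset.sum_ite_eq' Finset.univ j]
      simp
      ring
    have hopt := hP q hq0 hq1
    have hsum2 : ∑ g, w g * ∑ x, q x * u g (A x g) =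
        (∑ g, w g * ∑ x, p x * u g (A x g)) + ∑ g, w g * (p j * (u g (A l g) - u g (A j g))) := by
      rw [← Finset.sum_add_distrib]
      refine Finset.sum_congr rfl fun g _ => ?_
      rw [hsum g]; ring
    rw [hsum2] at hopt
    have hle : ∑ g, w g * (p j * (u g (A l g) - u g (A j g))) ≤ 0 := by linarith
    have hzero : ∀ g : Fin n, g ∉ ({i, h} : Finset (Fin n)) →
        w g * (p j * (u g (A l g) - u g (A j g))) = 0 := by
      intro g hg
      simp only [Finset.mem_insert, Finset.mem_singleton, not_or] at hg
      rw [hl1 g hg.1 hg.2]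
      ring
    have hpair : ∑ g, w g * (p j * (u g (A l g) - u g (A j g))) =
        w i * (p j * (u i (A j h) - u i (A j i))) + w h * (p j * (u h (A j i) - u h (A j h))) := by
      rw [← Finset.sum_subset (Finset.subset_univ ({i, h} : Finset (Fin n)))
        (fun g _ hg => hzero g hg)]
      rw [Finset.sum_pair hih, hl2, hl3]
    rw [hpair] at hle
    -- divide by p j
    have hkey : w i * (u i (A j h) - u i (A j i)) ≤ w h * (u h (A j h) - u h (A j i)) := by
      nlinarith
    have hwi := hw i
    have hwh := hw h
    have hdc : u h (A j i) < u h (A j h) := by nlinarith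
    -- the triple (i, h, j) is in the filter set
    have hmem : (i, h, j) ∈ (Finset.univ.filter fun t : Fin n × Fin n × Fin k =>
        u t.1 (A t.2.2 t.1) < u t.1 (A t.2.2 t.2.1) ∧
        u t.2.1 (A t.2.2 t.1) < u t.2.1 (A t.2.2 t.2.1)) := by
      simp [Finset.mem_filter]
      exact ⟨hd, hdc⟩
    have hinf := Finset.inf'_le (fun t : Fin n × Fin n × Fin k =>
        (u t.1 (A t.2.2 t.2.1) - u t.1 (A t.2.2 t.1)) /
          (u t.2.1 (A t.2.2 t.2.1) - u t.2.1 (A t.2.2 t.1))) hmem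
    simp only at hinf
    have hratio : 2 * ρ * (u h (A j h) - u h (A j i)) ≤ u i (A j h) - u i (A j i) := by
      have h2 : 2 * ρ ≤ (u i (A j h) - u i (A j i)) / (u h (A j h) - u h (A j i)) := by
        rw [hρ]; linarith [hinf]
      have := (le_div_iff₀ (by linarith : (0:ℝ) < u h (A j h) - u h (A j i))).mp h2
      linarith
    nlinarith [mul_pos hρ0 (sub_pos.mpr hdc), mul_pos hwi (sub_pos.mpr hdc)]
  -- conclude
  have : ∑ j, p j * u i (A j h) ≤ ∑ j, p j * u i (A j i) := by
    refine Finset.sum_le_sum fun j _ => ?_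
    rcases (hp0 j).lt_or_eq with hpj | hpj
    · exact mul_le_mul_of_nonneg_left (key j hpj) (le_of_lt hpj)
    · rw [← hpj]; simp
  linarith
end

section
/- In the two-player reduction instance, if there exists an index j with x_{1j} = x_{2j} = 1 (no-instance of Disjointness in the paper's terminology), then any Pareto Efficient deterministic allocation (A_1, A_2) gives both players utility exactly 3p, hence u_1(A_1) + u_2(A_2) = 6p. -/
open scoped Classical in
/-- In the two-player reduction instance, if some index j has
x_{1j} = x_{2j} = 1, then any Pareto Efficient deterministic allocation gives
both players utility exactly 3p, hence total utility 6p. -/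
theorem stmt14 (p r : ℕ) (hp : 1 ≤ p)
    (T : Fin r → Finset (Fin (2 * p))) (hT : ∀ j, (T j).card = p)
    (x1 x2 : Fin r → Bool)
    (u1 u2 : Finset (Fin (2 * p)) → ℝ)
    (hu1 : ∀ S, u1 S = if S.card < p then 3 * (S.card : ℝ)
      else if p < S.card then 3 * p
      else if ∃ j, x1 j = true ∧ S = T j then 3 * p else 3 * p - 1)
    (hu2 : ∀ S, u2 S = if S.card < p then 3 * (S.card : ℝ)
      else if p < S.card then 3 * p
      else if ∃ j, x2 j = true ∧ S = (T j)ᶜ then 3 * p else 3 * p - 1)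
    (j0 : Fin r) (hx1 : x1 j0 = true) (hx2 : x2 j0 = true)
    (A1 A2 : Finset (Fin (2 * p))) (hdisj : Disjoint A1 A2)
    (hPE : ¬ ∃ B1 B2 : Finset (Fin (2 * p)), Disjoint B1 B2 ∧
      u1 A1 ≤ u1 B1 ∧ u2 A2 ≤ u2 B2 ∧ (u1 A1 < u1 B1 ∨ u2 A2 < u2 B2)) :
    u1 A1 = 3 * p ∧ u2 A2 = 3 * p ∧ u1 A1 + u2 A2 = 6 * p := by
  have hub1 : ∀ S, u1 S ≤ 3 * p := by
    intro S
    rw [hu1]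
    split_ifs with h1 h2 h3
    · have : (S.card : ℝ) ≤ p := by exact_mod_cast h1.le
      linarith
    · exact le_refl _
    · exact le_refl _
    · linarith
  have hub2 : ∀ S, u2 S ≤ 3 * p := by
    intro S
    rw [hu2]
    split_ifs with h1 h2 h3
    · have : (S.card : ℝ) ≤ p := by exact_mod_cast h1.le
      linarith
    · exact le_refl _
    · exact le_refl _
    · linarith
  have hB1 : u1 (T j0) = 3 * p := by
    rw [hu1]
    have hc := hT j0
    rw [hc]
    simp only [lt_irrefl, if_false]
    rw [if_pos ⟨j0, hx1, rfl⟩]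
  have hccard : ((T j0)ᶜ).card = p := by
    have := Finset.card_compl (T j0)
    rw [hT j0, Fintype.card_fin] at this
    omega
  have hB2 : u2 ((T j0)ᶜ) = 3 * p := by
    rw [hu2, hccard]
    simp only [lt_irrefl, if_false]
    rw [if_pos ⟨j0, hx2, rfl⟩]
  push_neg at hPE
  have h := hPE (T j0) (T j0)ᶜ disjoint_compl_right (by rw [hB1]; exact hub1 A1)
    (by rw [hB2]; exact hub2 A2)
  rw [hB1, hB2] at h
  have h1 : u1 A1 = 3 * p := le_antisymm (hub1 A1) h.1
  have h2 : u2 A2 = 3 * p := le_antisymm (hub2 A2) h.2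
  exact ⟨h1, h2, by rw [h1, h2]; ring⟩
end

section
/- In the two-player reduction instance, if for every index j either x_{1j} = 0 or x_{2j} = 0, then for every deterministic allocation (A_1, A_2) with A_1 ∪ A_2 = {1,...,2p} and A_1 ∩ A_2 = ∅, the total utility satisfies u_1(A_1) + u_2(A_2) ≤ 6p − 1. -/
open scoped Classical in
/-- In the two-player reduction instance, if for every index j either
x_{1j} = 0 or x_{2j} = 0, then every full deterministic allocation has total
utility at most 6p − 1. -/
theorem stmt15 (p r : ℕ) (hp : 1 ≤ p)
    (T : Fin r → Finset (Fin (2 * p))) (hT : ∀ j, (T j).card = p)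
    (hT1 : ∀ j, (⟨0, by omega⟩ : Fin (2 * p)) ∈ T j)
    (hTinj : Function.Injective T)
    (hTsurj : ∀ S : Finset (Fin (2 * p)), S.card = p →
      (⟨0, by omega⟩ : Fin (2 * p)) ∈ S → ∃ j, S = T j)
    (x1 x2 : Fin r → Bool)
    (u1 u2 : Finset (Fin (2 * p)) → ℝ)
    (hu1 : ∀ S, u1 S = if S.card < p then 3 * (S.card : ℝ)
      else if p < S.card then 3 * p
      else if ∃ j, x1 j = true ∧ S = T j then 3 * p else 3 * p - 1)
    (hu2 : ∀ S, u2 S = if S.card < p then 3 * (S.card : ℝ)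
      else if p < S.card then 3 * p
      else if ∃ j, x2 j = true ∧ S = (T j)ᶜ then 3 * p else 3 * p - 1)
    (hx : ∀ j, x1 j = false ∨ x2 j = false)
    (A1 A2 : Finset (Fin (2 * p))) (hdisj : Disjoint A1 A2)
    (hfull : A1 ∪ A2 = Finset.univ) :
    u1 A1 + u2 A2 ≤ 6 * p - 1 := by
  have hA2 : A2 = A1ᶜ := by
    ext a
    simp only [Finset.mem_compl]
    constructor
    · intro h h1; exact Finset.disjoint_left.mp hdisj h1 h
    · intro h
      have := Finset.mem_univ a
      rw [← hfull, Finset.mem_union] at this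
      tauto
  have hcard : A1.card + A2.card = 2 * p := by
    rw [← Finset.card_union_of_disjoint hdisj, hfull, Finset.card_univ, Fintype.card_fin]
  have hu1le : u1 A1 ≤ 3 * p := by
    rw [hu1]; split_ifs with h1 h2 h3
    · have : (A1.card : ℝ) ≤ p := by exact_mod_cast h1.le
      linarith
    · linarith
    · linarith
    · linarith
  have hu2le : u2 A2 ≤ 3 * p := by
    rw [hu2]; split_ifs with h1 h2 h3
    · have : (A2.card : ℝ) ≤ p := by exact_mod_cast h1.le
      linarith
    · linarith
    · linarith
    · linarith
  rcases lt_trichotomy A1.card p with h1 | h1 | h1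
  · have : u1 A1 ≤ 3 * p - 3 := by
      rw [hu1, if_pos h1]
      have : (A1.card : ℝ) ≤ (p : ℝ) - 1 := by
        have : A1.card + 1 ≤ p := h1
        have := (Nat.cast_le (α := ℝ)).mpr this
        push_cast at this; linarith
      linarith
    have hp1 : (1 : ℝ) ≤ p := by exact_mod_cast hp
    linarith
  · -- both cards = p
    have h2 : A2.card = p := by omega
    by_cases h0 : (⟨0, by omega⟩ : Fin (2 * p)) ∈ A1
    · obtain ⟨j0, hj0⟩ := hTsurj A1 h1 h0
      cases hx j0 with
      | inl hx1 =>
        have : u1 A1 = 3 * p - 1 := by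
          rw [hu1, if_neg (by omega), if_neg (by omega), if_neg]
          rintro ⟨j, hxj, hAj⟩
          have : j = j0 := hTinj (by rw [← hAj, ← hj0])
          rw [this, hx1] at hxj; exact Bool.false_ne_true hxj
        linarith
      | inr hx2 =>
        have : u2 A2 = 3 * p - 1 := by
          rw [hu2, if_neg (by omega), if_neg (by omega), if_neg]
          rintro ⟨j, hxj, hAj⟩
          have hA1j : A1 = T j := by
            have := congrArg (·ᶜ) hAj
            simp only [compl_compl] at this
            rw [← this, hA2, compl_compl]
          have : j = j0 := hTinj (by rw [← hA1j, ← hj0])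
          rw [this, hx2] at hxj; exact Bool.false_ne_true hxj
        linarith
    · have : u1 A1 = 3 * p - 1 := by
        rw [hu1, if_neg (by omega), if_neg (by omega), if_neg]
        rintro ⟨j, _, hAj⟩
        exact h0 (hAj ▸ hT1 j)
      linarith
  · have h2 : A2.card < p := by omega
    have : u2 A2 ≤ 3 * p - 3 := by
      rw [hu2, if_pos h2]
      have : (A2.card : ℝ) ≤ (p : ℝ) - 1 := by
        have : A2.card + 1 ≤ p := h2
        have := (Nat.cast_le (α := ℝ)).mpr this
        push_cast at this; linarith
      linarith
    have hp1 : (1 : ℝ) ≤ p := by exact_mod_cast hp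
    linarith
end
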